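/- The function I(x) = x·log(x/2) + x·arsinh(2x) − x − (1/2)√(1+4x²) + 3/2, defined for x > 0 and extended by I(0) = 3/2 − 1/2 = 1 via continuity (lim_{x→0+} I(x) = 1), is strictly convex on (0,∞), attains its unique minimum value 0 at x = 2/3, and satisfies I(x) → ∞ as x → ∞. -/

import Mathlib

/-!
The derivative `I'(x) = log (x/2) + arsinh (2x)` is strictly increasing on `(0, ∞)`, so `I` is
strictly convex there, and it vanishes at `2/3` because `4/3 + √(1 + 16/9) = 3`, i.e.
`arsinh (4/3) = log 3`. A strictly convex function is strictly minimised at a critical point, and a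
convex function that increases somewhere grows at least linearly, hence tends to `∞`. Since
`Real.log 0 = 0`, `x log (x/2) = 2 · (x/2) log (x/2)` is continuous on all of `ℝ`, so the limit at
`0⁺` is just the value `I 0 = 1`.
-/

open Real Filter Topology

noncomputable def rateI (x : ℝ) : ℝ :=
  x * Real.log (x / 2) + x * Real.arsinh (2 * x) - x - Real.sqrt (1 + 4 * x ^ 2) / 2 + 3 / 2

open Set

theorem StrictConvexOn.lt_of_hasDerivAt_eq_zero {S : Set ℝ} {f : ℝ → ℝ} {c x : ℝ}
    (hf : StrictConvexOn ℝ S f) (hc : c ∈ S) (hx : x ∈ S) (hxc : x ≠ c)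
    (hf' : HasDerivAt f 0 c) : f c < f x := by
  rcases hxc.lt_or_gt with hlt | hgt
  · have := hf.slope_lt_of_hasDerivAt hx hc hlt hf'
    rw [slope_def_field, div_lt_iff₀ (sub_pos.2 hlt)] at this
    linarith
  · have := hf.lt_slope_of_hasDerivAt hc hx hgt hf'
    rw [slope_def_field, lt_div_iff₀ (sub_pos.2 hgt)] at this
    linarith

theorem ConvexOn.tendsto_atTop_of_lt {f : ℝ → ℝ} {a b : ℝ} (hf : ConvexOn ℝ (Ici a) f)
    (hab : a < b) (hfab : f a < f b) : Tendsto f atTop atTop := by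
  set k := (f b - f a) / (b - a)
  have hk : 0 < k := div_pos (sub_pos.2 hfab) (sub_pos.2 hab)
  have hline : Tendsto (fun x => f a + k * (x - a)) atTop atTop :=
    tendsto_atTop_add_const_left _ _
      ((tendsto_atTop_add_const_right _ _ tendsto_id).const_mul_atTop hk)
  refine tendsto_atTop_mono' _ ?_ hline
  filter_upwards [eventually_ge_atTop b] with x hbx
  have hax : a < x := hab.trans_le hbx
  have := hf.secant_mono self_mem_Ici hab.le (hab.le.trans hbx) hab.ne' hax.ne' hbx
  rw [le_div_iff₀ (sub_pos.2 hax)] at this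
  linarith

theorem continuous_rateI : Continuous rateI := by
  have h : Continuous fun x : ℝ => x * log (x / 2) := by
    have := (continuous_mul_log.comp (continuous_id.div_const 2)).const_mul 2
    convert this using 2 with x
    simp only [Function.comp_apply, id]
    ring
  have harsinh : Continuous fun x : ℝ => arsinh (2 * x) :=
    continuous_arsinh.comp (continuous_const_mul 2)
  unfold rateI
  fun_prop

theorem hasDerivAt_rateI {x : ℝ} (hx : 0 < x) :
    HasDerivAt rateI (log (x / 2) + arsinh (2 * x)) x := by
  have hlog := ((hasDerivAt_id' x).div_const 2).log (by positivity)
  have harsinh := ((hasDerivAt_id' x).const_mul 2).arsinh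
  have hsqrt := (((hasDerivAt_pow 2 x).const_mul 4).const_add 1).sqrt (by positivity)
  refine ((((((hasDerivAt_id' x).mul hlog).add ((hasDerivAt_id' x).mul harsinh)).sub
    (hasDerivAt_id' x)).sub (hsqrt.div_const 2)).add_const (3 / 2)).congr_deriv ?_
  rw [smul_eq_mul, show (1 : ℝ) + (2 * x) ^ 2 = 1 + 4 * x ^ 2 by ring]
  field_simp
  ring

theorem strictMonoOn_log_half_add_arsinh_two_mul :
    StrictMonoOn (fun x : ℝ => log (x / 2) + arsinh (2 * x)) (Ioi 0) := by
  intro a (ha : 0 < a) b _ hab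
  have hlog : log (a / 2) < log (b / 2) := log_lt_log (by positivity) (by linarith)
  have harsinh : arsinh (2 * a) < arsinh (2 * b) := arsinh_lt_arsinh.2 (by linarith)
  exact add_lt_add hlog harsinh

theorem arsinh_four_thirds : arsinh (4 / 3) = log 3 := by
  rw [arsinh, show (1 : ℝ) + (4 / 3) ^ 2 = (5 / 3) ^ 2 by norm_num, sqrt_sq (by norm_num)]
  norm_num

theorem hasDerivAt_rateI_two_thirds : HasDerivAt rateI 0 (2 / 3) := by
  convert hasDerivAt_rateI (x := 2 / 3) (by norm_num) using 1
  rw [show (2 / 3 : ℝ) / 2 = 3⁻¹ by norm_num, show (2 : ℝ) * (2 / 3) = 4 / 3 by norm_num,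
    arsinh_four_thirds, log_inv, neg_add_cancel]

theorem rateI_two_thirds : rateI (2 / 3) = 0 := by
  rw [rateI, show (2 / 3 : ℝ) / 2 = 3⁻¹ by norm_num, show (2 : ℝ) * (2 / 3) = 4 / 3 by norm_num,
    show (1 : ℝ) + 4 * (2 / 3) ^ 2 = (5 / 3) ^ 2 by norm_num, sqrt_sq (by norm_num),
    arsinh_four_thirds, log_inv]
  ring

theorem rateI_zero : rateI 0 = 1 := by
  norm_num [rateI]

theorem strictConvexOn_rateI : StrictConvexOn ℝ (Ioi 0) rateI := by
  refine StrictMonoOn.strictConvexOn_of_deriv (convex_Ioi 0) continuous_rateI.continuousOn ?_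
  rw [interior_Ioi]
  exact strictMonoOn_log_half_add_arsinh_two_mul.congr fun x hx => (hasDerivAt_rateI hx).deriv.symm

/-- The rate function `I` is strictly convex on `(0,∞)`, tends to `1` as `x → 0⁺`,
attains its unique minimum value `0` at `x = 2/3`, and tends to `∞` as `x → ∞`. -/
theorem rateI_properties :
    StrictConvexOn ℝ (Set.Ioi (0 : ℝ)) rateI ∧
    Filter.Tendsto rateI (𝓝[>] (0 : ℝ)) (𝓝 1) ∧
    rateI (2 / 3) = 0 ∧
    (∀ x : ℝ, 0 < x → x ≠ 2 / 3 → 0 < rateI x) ∧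
    Filter.Tendsto rateI Filter.atTop Filter.atTop := by
  have hpos : ∀ x : ℝ, 0 < x → x ≠ 2 / 3 → 0 < rateI x := fun x hx hne =>
    rateI_two_thirds ▸ strictConvexOn_rateI.lt_of_hasDerivAt_eq_zero (by norm_num) hx hne
      hasDerivAt_rateI_two_thirds
  refine ⟨strictConvexOn_rateI, ?_, rateI_two_thirds, hpos, ?_⟩
  · exact rateI_zero ▸ continuous_rateI.continuousWithinAt.tendsto
  · have hconv : ConvexOn ℝ (Ici (2 / 3)) rateI :=
      strictConvexOn_rateI.convexOn.subset (Ici_subset_Ioi.2 (by norm_num)) (convex_Ici _)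
    refine hconv.tendsto_atTop_of_lt (b := 1) (by norm_num) ?_
    rw [rateI_two_thirds]
    exact hpos 1 one_pos (by norm_num)
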